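/- In a CAT(0) space, the Cauchy–Schwarz inequality holds for the quasilinearization map: for all a,b,c,d ∈ X, ⟨ab→, cd→⟩ ≤ d(a,b)·d(c,d). -/

import Mathlib

open Set

noncomputable def quasi {X : Type*} [MetricSpace X] (a b c d : X) : ℝ :=
  (dist a d ^ 2 + dist b c ^ 2 - dist a c ^ 2 - dist b d ^ 2) / 2

lemma forall_nat_le (x y C : ℝ) (hC : 0 ≤ C)
    (h : ∀ n : ℕ, 0 < n → x ≤ y + C / n) : x ≤ y := by
  by_contra hxy
  push_neg at hxy
  obtain ⟨n, hn⟩ := exists_nat_gt (C / (x - y))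
  have hxy' : 0 < x - y := by linarith
  have hn0 : (0:ℝ) < n := lt_of_le_of_lt (div_nonneg hC (le_of_lt hxy')) hn
  have hn0' : 0 < n := by exact_mod_cast hn0
  have h1 := h n hn0'
  have h2 : C / (n:ℝ) < x - y := by
    rw [div_lt_iff₀ hn0]
    calc C = (C/(x-y)) * (x-y) := by field_simp
      _ < n * (x-y) := mul_lt_mul_of_pos_right hn hxy'
      _ = (x-y) * n := by ring
  linarith

/-- Key one-step lemma: in a CN space, for any four points,
`2⟨ab,cd⟩ ≤ d(a,b)² + d(c,d)²`.  Proved by looking at the midpoints of the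
diagonals `[a,d]` and `[b,c]` and applying the CN inequality three times. -/
lemma quasi_le_half_sq {X : Type*} [MetricSpace X]
    (geodesic : ∀ x y : X, ∃ c : ℝ → X, c 0 = x ∧ c 1 = y ∧
      ∀ s ∈ Icc (0:ℝ) 1, ∀ t ∈ Icc (0:ℝ) 1, dist (c s) (c t) = |s - t| * dist x y)
    (cn : ∀ (x y : X) (c : ℝ → X), c 0 = x → c 1 = y →
      (∀ s ∈ Icc (0:ℝ) 1, ∀ t ∈ Icc (0:ℝ) 1, dist (c s) (c t) = |s - t| * dist x y) →
      ∀ z : X, ∀ t ∈ Icc (0:ℝ) 1,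
        dist z (c t) ^ 2 ≤ (1 - t) * dist z x ^ 2 + t * dist z y ^ 2
          - t * (1 - t) * dist x y ^ 2)
    (a b c d : X) :
    quasi a b c d ≤ (dist a b ^ 2 + dist c d ^ 2) / 2 := by
  obtain ⟨γ, hγ0, hγ1, hγ⟩ := geodesic a d
  obtain ⟨η, hη0, hη1, hη⟩ := geodesic b c
  have h2 : (1/2 : ℝ) ∈ Icc (0:ℝ) 1 := by norm_num
  have H1 := cn a d γ hγ0 hγ1 hγ (η (1/2)) (1/2) h2
  have H2 := cn b c η hη0 hη1 hη a (1/2) h2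
  have H3 := cn b c η hη0 hη1 hη d (1/2) h2
  have h0 : (0:ℝ) ≤ dist (η (1/2)) (γ (1/2)) ^ 2 := sq_nonneg _
  rw [dist_comm (η (1/2)) a, dist_comm (η (1/2)) d] at H1
  rw [dist_comm d b, dist_comm d c] at H3
  unfold quasi
  linarith [H1, H2, H3, h0]

/-- Subdivision bound: splitting `[a,b]` into `k` equal pieces and `[c,d]` into
`n` equal pieces and using `quasi_le_half_sq` on each cell. -/
lemma quasi_le_subdiv {X : Type*} [MetricSpace X]
    (geodesic : ∀ x y : X, ∃ c : ℝ → X, c 0 = x ∧ c 1 = y ∧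
      ∀ s ∈ Icc (0:ℝ) 1, ∀ t ∈ Icc (0:ℝ) 1, dist (c s) (c t) = |s - t| * dist x y)
    (cn : ∀ (x y : X) (c : ℝ → X), c 0 = x → c 1 = y →
      (∀ s ∈ Icc (0:ℝ) 1, ∀ t ∈ Icc (0:ℝ) 1, dist (c s) (c t) = |s - t| * dist x y) →
      ∀ z : X, ∀ t ∈ Icc (0:ℝ) 1,
        dist z (c t) ^ 2 ≤ (1 - t) * dist z x ^ 2 + t * dist z y ^ 2
          - t * (1 - t) * dist x y ^ 2)
    (a b c d : X) (k n : ℕ) (hk : 0 < k) (hn : 0 < n) :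
    2 * quasi a b c d ≤ (n:ℝ)/k * dist a b ^ 2 + (k:ℝ)/n * dist c d ^ 2 := by
  obtain ⟨σ, hσ0, hσ1, hσ⟩ := geodesic a b
  obtain ⟨γ, hγ0, hγ1, hγ⟩ := geodesic c d
  have hk' : (0:ℝ) < k := by exact_mod_cast hk
  have hn' : (0:ℝ) < n := by exact_mod_cast hn
  set p : ℕ → X := fun i => σ ((i:ℝ)/k) with hp
  set q : ℕ → X := fun j => γ ((j:ℝ)/n) with hq
  have hmemk : ∀ i : ℕ, i ≤ k → ((i:ℝ)/k) ∈ Icc (0:ℝ) 1 := by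
    intro i hi
    constructor
    · positivity
    · rw [div_le_one hk']; exact_mod_cast hi
  have hmemn : ∀ j : ℕ, j ≤ n → ((j:ℝ)/n) ∈ Icc (0:ℝ) 1 := by
    intro j hj
    constructor
    · positivity
    · rw [div_le_one hn']; exact_mod_cast hj
  have hdp : ∀ i : ℕ, i < k → dist (p i) (p (i+1)) = dist a b / k := by
    intro i hi
    have := hσ ((i:ℝ)/k) (hmemk i (le_of_lt hi)) (((i+1:ℕ):ℝ)/k) (hmemk (i+1) hi)
    rw [hp]
    simp only []
    rw [this]
    have : |(i:ℝ)/k - ((i+1:ℕ):ℝ)/k| = 1/k := by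
      rw [div_sub_div_same]
      push_cast
      rw [abs_div, abs_of_pos hk']
      norm_num
    rw [this]; ring
  have hdq : ∀ j : ℕ, j < n → dist (q j) (q (j+1)) = dist c d / n := by
    intro j hj
    have := hγ ((j:ℝ)/n) (hmemn j (le_of_lt hj)) (((j+1:ℕ):ℝ)/n) (hmemn (j+1) hj)
    rw [hq]
    simp only []
    rw [this]
    have : |(j:ℝ)/n - ((j+1:ℕ):ℝ)/n| = 1/n := by
      rw [div_sub_div_same]
      push_cast
      rw [abs_div, abs_of_pos hn']
      norm_num
    rw [this]; ring
  -- endpoints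
  have hp0 : p 0 = a := by
    rw [hp]; simp only [Nat.cast_zero, zero_div]; exact hσ0
  have hpk : p k = b := by
    rw [hp]; simp only []; rw [div_self (ne_of_gt hk')]; exact hσ1
  have hq0 : q 0 = c := by
    rw [hq]; simp only [Nat.cast_zero, zero_div]; exact hγ0
  have hqn : q n = d := by
    rw [hq]; simp only []; rw [div_self (ne_of_gt hn')]; exact hγ1
  -- telescoping identity
  set G : ℕ → ℕ → ℝ := fun i j => dist (p i) (q j) ^ 2 with hG
  have tele : ∑ i ∈ Finset.range k, ∑ j ∈ Finset.range n,
      quasi (p i) (p (i+1)) (q j) (q (j+1)) = quasi a b c d := by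
    have hcell : ∀ i j : ℕ, quasi (p i) (p (i+1)) (q j) (q (j+1)) =
        ((G i (j+1) - G i j) - (G (i+1) (j+1) - G (i+1) j)) / 2 := by
      intro i j; unfold quasi; rw [hG]; ring
    have hrow : ∀ i : ℕ, ∑ j ∈ Finset.range n,
        quasi (p i) (p (i+1)) (q j) (q (j+1)) =
        ((G i n - G i 0) - (G (i+1) n - G (i+1) 0)) / 2 := by
      intro i
      have : ∑ j ∈ Finset.range n, quasi (p i) (p (i+1)) (q j) (q (j+1)) =
          (∑ j ∈ Finset.range n,
            ((G i (j+1) - G i j) - (G (i+1) (j+1) - G (i+1) j))) / 2 := by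
        rw [Finset.sum_div]
        exact Finset.sum_congr rfl fun j _ => hcell i j
      rw [this, Finset.sum_sub_distrib, Finset.sum_range_sub (fun j => G i j),
        Finset.sum_range_sub (fun j => G (i+1) j)]
    have : ∑ i ∈ Finset.range k, ∑ j ∈ Finset.range n,
        quasi (p i) (p (i+1)) (q j) (q (j+1)) =
        ∑ i ∈ Finset.range k,
          (((G i n - G i 0) - (G (i+1) n - G (i+1) 0)) / 2) := by
      exact Finset.sum_congr rfl fun i _ => hrow i
    rw [this]
    have : ∑ i ∈ Finset.range k,
        (((G i n - G i 0) - (G (i+1) n - G (i+1) 0)) / 2) =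
        (∑ i ∈ Finset.range k,
          ((fun i => G i n - G i 0) i - (fun i => G i n - G i 0) (i+1))) / 2 := by
      rw [Finset.sum_div]
    rw [this, Finset.sum_range_sub' (fun i => G i n - G i 0)]
    rw [hG]
    simp only [hp0, hpk, hq0, hqn]
    unfold quasi; ring
  -- bound each cell
  have hbound : ∀ i ∈ Finset.range k, ∀ j ∈ Finset.range n,
      quasi (p i) (p (i+1)) (q j) (q (j+1)) ≤
        ((dist a b / k) ^ 2 + (dist c d / n) ^ 2) / 2 := by
    intro i hi j hj
    rw [Finset.mem_range] at hi hj
    have := quasi_le_half_sq geodesic cn (p i) (p (i+1)) (q j) (q (j+1))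
    rwa [hdp i hi, hdq j hj] at this
  have hsum : quasi a b c d ≤
      (k : ℝ) * n * (((dist a b / k) ^ 2 + (dist c d / n) ^ 2) / 2) := by
    rw [← tele]
    calc ∑ i ∈ Finset.range k, ∑ j ∈ Finset.range n,
          quasi (p i) (p (i+1)) (q j) (q (j+1))
        ≤ ∑ i ∈ Finset.range k, ∑ j ∈ Finset.range n,
          (((dist a b / k) ^ 2 + (dist c d / n) ^ 2) / 2) := by
          apply Finset.sum_le_sum
          intro i hi
          apply Finset.sum_le_sum
          intro j hj
          exact hbound i hi j hj
      _ = (k : ℝ) * n * (((dist a b / k) ^ 2 + (dist c d / n) ^ 2) / 2) := by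
          rw [Finset.sum_const, Finset.sum_const]
          simp [Finset.card_range]
          ring
  have : (k : ℝ) * n * (((dist a b / k) ^ 2 + (dist c d / n) ^ 2) / 2) =
      ((n:ℝ)/k * dist a b ^ 2 + (k:ℝ)/n * dist c d ^ 2) / 2 := by
    field_simp
  rw [this] at hsum
  linarith

theorem stmt_2 {X : Type*} [MetricSpace X]
    (geodesic : ∀ x y : X, ∃ c : ℝ → X, c 0 = x ∧ c 1 = y ∧
      ∀ s ∈ Icc (0:ℝ) 1, ∀ t ∈ Icc (0:ℝ) 1, dist (c s) (c t) = |s - t| * dist x y)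
    (cn : ∀ (x y : X) (c : ℝ → X), c 0 = x → c 1 = y →
      (∀ s ∈ Icc (0:ℝ) 1, ∀ t ∈ Icc (0:ℝ) 1, dist (c s) (c t) = |s - t| * dist x y) →
      ∀ z : X, ∀ t ∈ Icc (0:ℝ) 1,
        dist z (c t) ^ 2 ≤ (1 - t) * dist z x ^ 2 + t * dist z y ^ 2
          - t * (1 - t) * dist x y ^ 2) :
    ∀ a b c d : X, quasi a b c d ≤ dist a b * dist c d := by
  intro a b c d
  set E := dist a b with hE
  set D := dist c d with hD
  have hE0 : 0 ≤ E := dist_nonneg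
  have hD0 : 0 ≤ D := dist_nonneg
  have main : ∀ k n : ℕ, 0 < k → 0 < n →
      2 * quasi a b c d ≤ (n:ℝ)/k * E ^ 2 + (k:ℝ)/n * D ^ 2 :=
    fun k n hk hn => quasi_le_subdiv geodesic cn a b c d k n hk hn
  rcases eq_or_lt_of_le hE0 with hE0' | hEpos
  · -- E = 0
    have h2 : 2 * quasi a b c d ≤ 0 := by
      apply forall_nat_le (2 * quasi a b c d) 0 (D ^ 2) (sq_nonneg D)
      intro n hn
      have h1 := main 1 n one_pos hn
      have heq : ((n:ℝ)/1) * E ^ 2 + ((1:ℕ):ℝ)/n * D ^ 2 = 0 + D ^ 2 / n := by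
        rw [← hE0']; push_cast; ring
      linarith
    have hED : E * D = 0 := by rw [← hE0']; ring
    linarith
  · rcases eq_or_lt_of_le hD0 with hD0' | hDpos
    · -- D = 0
      have h2 : 2 * quasi a b c d ≤ 0 := by
        apply forall_nat_le (2 * quasi a b c d) 0 (E ^ 2) (sq_nonneg E)
        intro k hk
        have h1 := main k 1 hk one_pos
        have heq : (((1:ℕ):ℝ)/k) * E ^ 2 + ((k:ℝ)/1) * D ^ 2 = 0 + E ^ 2 / k := by
          rw [← hD0']; push_cast; ring
        linarith
      have hED : E * D = 0 := by rw [← hD0']; ring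
      linarith
    · -- E, D > 0 : choose k ≈ n E / D
      have h2 : 2 * quasi a b c d ≤ 2 * (E * D) := by
        apply forall_nat_le (2 * quasi a b c d) (2 * (E * D)) (D ^ 2) (sq_nonneg D)
        intro n hn
        have hn' : (0:ℝ) < n := by exact_mod_cast hn
        set k : ℕ := ⌈(n:ℝ) * E / D⌉₊ with hkdef
        have hx : (0:ℝ) < (n:ℝ) * E / D := by positivity
        have hk0 : 0 < k := by
          rw [hkdef]
          exact Nat.ceil_pos.mpr hx
        have hk' : (0:ℝ) < k := by exact_mod_cast hk0
        have hkge : (n:ℝ) * E / D ≤ (k:ℝ) := Nat.le_ceil _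
        have hkle : (k:ℝ) ≤ (n:ℝ) * E / D + 1 := by
          rw [hkdef]
          exact le_of_lt (Nat.ceil_lt_add_one (le_of_lt hx))
        have hnk : (n:ℝ) * E ≤ (k:ℝ) * D := by
          rw [div_le_iff₀ hDpos] at hkge
          linarith
        have h1 : (n:ℝ)/k * E ^ 2 ≤ E * D := by
          rw [div_mul_eq_mul_div, div_le_iff₀ hk']
          calc (n:ℝ) * E ^ 2 = ((n:ℝ) * E) * E := by ring
            _ ≤ ((k:ℝ) * D) * E := mul_le_mul_of_nonneg_right hnk hE0
            _ = E * D * k := by ring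
        have h2 : (k:ℝ)/n * D ^ 2 ≤ E * D + D ^ 2 / n := by
          rw [div_mul_eq_mul_div, div_le_iff₀ hn']
          have expand : (E * D + D ^ 2 / n) * n = ((n:ℝ) * E / D + 1) * D ^ 2 := by
            field_simp
          rw [expand]
          exact mul_le_mul_of_nonneg_right hkle (sq_nonneg D)
        have h3 := main k n hk0 hn
        linarith
      linarith
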